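/- Let j = exp(2πi/3) and define the 3×3 complex matrices Q₁ = [[0,1,0],[0,0,j],[j²,0,0]], Q₂ = [[0,j,0],[0,0,1],[j²,0,0]], Q₃ = [[0,1,0],[0,0,1],[1,0,0]]. Then for all a, b, c ∈ {1,2,3}: Qₐ·Q_b·Q_c + Q_b·Q_c·Qₐ + Q_c·Qₐ·Q_b = 3·η_{abc}·I₃, where η_{111} = η_{222} = η_{333} = 1, η_{123} = η_{231} = η_{312} = 1, η_{213} = η_{321} = η_{132} = j², and all other components η_{abc} are zero. -/

import Mathlib

open Matrix

/-- The primitive cube root of unity `j = exp(2πi/3)`. -/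
noncomputable def jRoot : ℂ := Complex.exp (2 * Real.pi * Complex.I / 3)

/-- The three generators of the ternary Clifford algebra (indices 1,2,3
rendered as `0,1,2 : Fin 3`). -/
noncomputable def Q : Fin 3 → Matrix (Fin 3) (Fin 3) ℂ
  | 0 => !![0, 1, 0; 0, 0, jRoot; jRoot ^ 2, 0, 0]
  | 1 => !![0, jRoot, 0; 0, 0, 1; jRoot ^ 2, 0, 0]
  | 2 => !![0, 1, 0; 0, 0, 1; 1, 0, 0]

/-- The symbol `η_{abc}`: `1` on the diagonal, `1` on even permutations of
`(1,2,3)`, `j²` on odd permutations, and `0` otherwise. -/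
noncomputable def ηsym : Fin 3 → Fin 3 → Fin 3 → ℂ := fun a b c =>
  if a = b ∧ b = c then 1
  else if (a, b, c) = (0, 1, 2) ∨ (a, b, c) = (1, 2, 0) ∨ (a, b, c) = (2, 0, 1) then 1
  else if (a, b, c) = (1, 0, 2) ∨ (a, b, c) = (2, 1, 0) ∨ (a, b, c) = (0, 2, 1) then jRoot ^ 2
  else 0

/-! Each `Q a` is `D_a P` with `P` the cyclic shift, `P³ = 1`, and `D_a` diagonal. Moving `P` past
diagonal matrices makes every triple product `Q a * Q b * Q c` diagonal, and its two cyclic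
rotations carry the same diagonal entries, cyclically permuted; so the cyclic sum is
`tr (Q a * Q b * Q c) • 1`. That trace is a sum of three powers of `j` whose exponents run through
an arithmetic progression mod 3, so it is `3 jᵏ` or, by `1 + j + j² = 0`, zero. -/

theorem jRoot_isPrimitiveRoot : IsPrimitiveRoot jRoot 3 := by
  simpa [jRoot] using Complex.isPrimitiveRoot_exp 3 (by norm_num)

theorem jRoot_sq_add_jRoot_add_one : jRoot ^ 2 + jRoot + 1 = 0 := by
  have h := jRoot_isPrimitiveRoot.geom_sum_eq_zero (by norm_num)
  rw [Finset.sum_range_succ, Finset.sum_range_succ, Finset.sum_range_one] at h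
  linear_combination h

section CyclicShift

variable {R : Type*}

def cyclicShift [Zero R] [One R] (n : ℕ) [NeZero n] : Matrix (Fin n) (Fin n) R :=
  of fun i k => if k = i + 1 then 1 else 0

theorem cyclicShift_mul_diagonal [NonAssocSemiring R] {n : ℕ} [NeZero n] (v : Fin n → R) :
    cyclicShift n * diagonal v = diagonal (fun i => v (i + 1)) * cyclicShift n := by
  ext i k
  by_cases h : k = i + 1 <;> simp [cyclicShift, h]

theorem diagonal_mul_cyclicShift_mul_diagonal_mul [CommSemiring R] {n : ℕ} [NeZero n]
    (u v : Fin n → R) (M : Matrix (Fin n) (Fin n) R) :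
    diagonal u * cyclicShift n * (diagonal v * M) =
      diagonal (fun i => u i * v (i + 1)) * (cyclicShift n * M) := by
  rw [Matrix.mul_assoc, ← Matrix.mul_assoc (cyclicShift n), cyclicShift_mul_diagonal,
    Matrix.mul_assoc, ← Matrix.mul_assoc, diagonal_mul_diagonal]

theorem cyclicShift_pow_three [Semiring R] :
    (cyclicShift 3 : Matrix (Fin 3) (Fin 3) R) ^ 3 = 1 := by
  ext i k
  fin_cases i <;> fin_cases k <;>
    simp [pow_succ, cyclicShift, mul_apply, Fin.sum_univ_three, one_apply]

theorem diagonal_mul_cyclicShift_triple [CommSemiring R] (u v w : Fin 3 → R) :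
    diagonal u * cyclicShift 3 * (diagonal v * cyclicShift 3) * (diagonal w * cyclicShift 3) =
      diagonal (fun i => u i * v (i + 1) * w (i + 2)) := by
  rw [Matrix.mul_assoc, diagonal_mul_cyclicShift_mul_diagonal_mul,
    diagonal_mul_cyclicShift_mul_diagonal_mul, ← pow_three, cyclicShift_pow_three, Matrix.mul_one]
  congr 1
  ext i
  rw [mul_assoc, add_assoc]
  rfl

theorem cyclic_sum_diagonal_mul_cyclicShift [CommSemiring R] (u v w : Fin 3 → R) :
    diagonal u * cyclicShift 3 * (diagonal v * cyclicShift 3) * (diagonal w * cyclicShift 3) +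
      diagonal v * cyclicShift 3 * (diagonal w * cyclicShift 3) * (diagonal u * cyclicShift 3) +
      diagonal w * cyclicShift 3 * (diagonal u * cyclicShift 3) * (diagonal v * cyclicShift 3) =
      (∑ i, u i * v (i + 1) * w (i + 2)) • 1 := by
  simp only [diagonal_mul_cyclicShift_triple, diagonal_add, smul_one_eq_diagonal]
  congr 1
  ext i
  fin_cases i <;> simp [Fin.sum_univ_three] <;> ring

end CyclicShift

noncomputable def qPhase (a i : Fin 3) : ℂ := Q a i (i + 1)

theorem Q_eq_diagonal_mul_cyclicShift (a : Fin 3) : Q a = diagonal (qPhase a) * cyclicShift 3 := by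
  ext i k
  fin_cases a <;> fin_cases i <;> fin_cases k <;> simp [Q, qPhase, cyclicShift]

theorem sum_qPhase_cyclic (a b c : Fin 3) :
    ∑ i, qPhase a i * qPhase b (i + 1) * qPhase c (i + 2) = 3 * ηsym a b c := by
  have := jRoot_sq_add_jRoot_add_one
  fin_cases a <;> fin_cases b <;> fin_cases c <;>
    simp [Q, qPhase, ηsym, Fin.sum_univ_three] <;> grind

/-- The ternary Clifford algebra relation: the cyclic ternary anticommutator of
the matrices `Q₁, Q₂, Q₃` equals `3·η_{abc}·𝟙`. -/
theorem ternary_clifford (a b c : Fin 3) :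
    Q a * Q b * Q c + Q b * Q c * Q a + Q c * Q a * Q b =
      (3 * ηsym a b c) • (1 : Matrix (Fin 3) (Fin 3) ℂ) := by
  simp only [Q_eq_diagonal_mul_cyclicShift]
  rw [cyclic_sum_diagonal_mul_cyclicShift, sum_qPhase_cyclic]
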